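/- Let Y be a functional extension of X. Then Y satisfies the principle Poss (for every family F of subsets of X with the finite intersection property, the intersection ⋂_{A ∈ F} *A is nonempty) if and only if the S-topology on Y is quasi-compact (i.e. Y with the S-topology is a compact space, Hausdorffness not required). -/

import Mathlib

attribute [local instance] Classical.propDecidable

/-- A functional extension of `X`: a proper superset `Y ⊇ X` (given via an injective,
non-surjective inclusion) with two designated distinct elements `0, 1 ∈ X`, together with
a distinguished extension `star f : Y → Y` of every `f : X → X`, preserving compositions
and equalizers, and with directed Puritz preorder. -/
structure FunctionalExtension (X Y : Type*) where
  zero : X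
  one : X
  zero_ne_one : zero ≠ one
  incl : X → Y
  incl_injective : Function.Injective incl
  proper : ¬ Function.Surjective incl
  star : (X → X) → Y → Y
  star_incl : ∀ (f : X → X) (x : X), star f (incl x) = incl (f x)
  comp : ∀ f g : X → X, star (g ∘ f) = star g ∘ star f
  equ : ∀ f g : X → X,
    star (fun x => if f x = g x then one else zero) =
      fun ξ => if star f ξ = star g ξ then incl one else incl zero
  dir : ∀ ξ η : Y, ∃ (p₁ p₂ : X → X) (ζ : Y), star p₁ ζ = ξ ∧ star p₂ ζ = η

namespace FunctionalExtension

variable {X Y : Type*}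

/-- The star-extension `*A ⊆ Y` of a subset `A ⊆ X`:
the set where the extension of the characteristic function of `A` takes the value `1`. -/
def sets (E : FunctionalExtension X Y) (A : Set X) : Set Y :=
  {ξ | E.star (fun x => if x ∈ A then E.one else E.zero) ξ = E.incl E.one}

/-- The S-topology on `Y`: the topology with basis `{*A : A ⊆ X}`. -/
def sTopology (E : FunctionalExtension X Y) : TopologicalSpace Y :=
  TopologicalSpace.generateFrom (Set.range E.sets)

end FunctionalExtension

namespace FunctionalExtension

variable {X Y : Type*}

variable (E : FunctionalExtension X Y)

/-- Characteristic function with the canonical decidability instance. -/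
noncomputable def chi (A : Set X) : X → X := fun x => if x ∈ A then E.one else E.zero

lemma mem_sets {A : Set X} {ξ : Y} :
    ξ ∈ E.sets A ↔ E.star (E.chi A) ξ = E.incl E.one := Iff.rfl

lemma incl_ne : E.incl E.zero ≠ E.incl E.one :=
  fun h => E.zero_ne_one (E.incl_injective h)

lemma star_const_one : E.star (fun _ => E.one) = fun _ => E.incl E.one := by
  have h := E.equ id id
  have h2 : (fun x => if (id x : X) = id x then E.one else E.zero) = fun _ : X => E.one := by
    funext x; simp
  rw [h2] at h
  rw [h]; funext ξ; simp

lemma star_const (c : X) (ξ : Y) : E.star (fun _ => c) ξ = E.incl c := by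
  have h : (fun _ : X => c) = (fun _ : X => c) ∘ (fun _ : X => E.one) := rfl
  rw [h, E.comp, Function.comp_apply, E.star_const_one]
  exact E.star_incl (fun _ => c) E.one

lemma star_id (ξ : Y) : E.star id ξ = ξ := by
  obtain ⟨p₁, _, ζ, h₁, _⟩ := E.dir ξ ξ
  have := congrFun (E.comp p₁ id) ζ
  simp only [Function.id_comp, Function.comp_apply] at this
  rw [← h₁, ← this]

lemma sets_eq_equ (f g : X → X) :
    E.sets {x | f x = g x} = {ξ | E.star f ξ = E.star g ξ} := by
  have hχ : E.chi {x | f x = g x} = fun x => if f x = g x then E.one else E.zero := by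
    funext x
    exact if_congr (Set.mem_setOf_eq ▸ Iff.rfl) rfl rfl
  ext ξ
  rw [E.mem_sets, hχ, Set.mem_setOf_eq]
  rw [congrFun (E.equ f g) ξ]
  constructor
  · intro h
    by_contra hne
    rw [if_neg hne] at h
    exact E.incl_ne h
  · intro h; rw [if_pos h]

lemma star_chi_cases (A : Set X) (ξ : Y) :
    E.star (E.chi A) ξ = E.incl E.one ∨ E.star (E.chi A) ξ = E.incl E.zero := by
  have key : (fun x => if E.chi A x = (fun _ : X => E.one) x then E.one else E.zero)
      = E.chi A := by
    funext x
    by_cases hx : x ∈ A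
    · simp [chi, hx]
    · simp [chi, hx, E.zero_ne_one]
  have h := congrFun (E.equ (E.chi A) (fun _ => E.one)) ξ
  rw [key, E.star_const_one] at h
  by_cases hc : E.star (E.chi A) ξ = E.incl E.one
  · exact Or.inl hc
  · right; rw [h, if_neg hc]

lemma sets_compl (A : Set X) : E.sets Aᶜ = (E.sets A)ᶜ := by
  have key : (fun x => if E.chi A x = (fun _ : X => E.zero) x then E.one else E.zero)
      = E.chi Aᶜ := by
    funext x
    by_cases hx : x ∈ A
    · simp [chi, hx, Ne.symm E.zero_ne_one]
    · simp [chi, hx]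
  have h01 : E.incl E.one ≠ E.incl E.zero := fun h' => E.incl_ne h'.symm
  ext ξ
  have h := congrFun (E.equ (E.chi A) (fun _ => E.zero)) ξ
  rw [key, E.star_const] at h
  rw [Set.mem_compl_iff, E.mem_sets, E.mem_sets, h]
  rcases E.star_chi_cases A ξ with hc | hc <;> rw [hc]
  · rw [if_neg h01]
    simp [E.incl_ne]
  · rw [if_pos rfl]
    simp [E.incl_ne]

lemma incl_mem_sets {A : Set X} {x : X} (hx : x ∈ A) : E.incl x ∈ E.sets A := by
  rw [E.mem_sets, E.star_incl]
  have : E.chi A x = E.one := if_pos hx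
  rw [this]

lemma sets_empty : E.sets (∅ : Set X) = ∅ := by
  have hfn : E.chi (∅ : Set X) = fun _ => E.zero := by
    funext x; exact if_neg (fun h => h)
  ext ξ
  rw [E.mem_sets, hfn, E.star_const]
  simp [E.incl_ne]

lemma sets_univ : E.sets (Set.univ : Set X) = Set.univ := by
  have hfn : E.chi (Set.univ : Set X) = fun _ => E.one := by
    funext x; exact if_pos trivial
  ext ξ
  rw [E.mem_sets, hfn, E.star_const]
  simp

lemma star_retract {A : Set X} {x₀ : X} (hx₀ : x₀ ∈ A) {ξ : Y} (hξ : ξ ∈ E.sets A) :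
    E.star (fun x => if x ∈ A then x else x₀) ξ = ξ := by
  set s : X → X := fun x => if x ∈ A then x else x₀ with hs
  have hA : {x | s x = id x} = A := by
    ext x
    simp only [Set.mem_setOf_eq, hs, id_eq]
    by_cases hx : x ∈ A
    · simp [hx]
    · simp only [if_neg hx]
      constructor
      · intro h; exact absurd (h ▸ hx₀) hx
      · intro h; exact absurd h hx
  have heq := E.sets_eq_equ s id
  rw [hA] at heq
  rw [heq] at hξ
  rw [hξ, E.star_id]

lemma sets_mono {A B : Set X} (h : A ⊆ B) : E.sets A ⊆ E.sets B := by
  rcases A.eq_empty_or_nonempty with hA | ⟨x₀, hx₀⟩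
  · rw [hA, E.sets_empty]; exact Set.empty_subset _
  intro ξ hξ
  have hsξ := E.star_retract hx₀ hξ
  have hcomp : E.chi B ∘ (fun x => if x ∈ A then x else x₀) = fun _ : X => E.one := by
    funext x
    by_cases hx : x ∈ A
    · simp [chi, Function.comp, hx, h hx]
    · simp [chi, Function.comp, hx, h hx₀]
  rw [E.mem_sets]
  calc E.star (E.chi B) ξ
      = E.star (E.chi B) (E.star (fun x => if x ∈ A then x else x₀) ξ) := by rw [hsξ]
    _ = E.star (E.chi B ∘ (fun x => if x ∈ A then x else x₀)) ξ := by
        rw [E.comp]; rfl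
    _ = E.incl E.one := by rw [hcomp, E.star_const]

lemma sets_inter (A B : Set X) : E.sets (A ∩ B) = E.sets A ∩ E.sets B := by
  apply Set.Subset.antisymm
  · exact Set.subset_inter (E.sets_mono Set.inter_subset_left)
      (E.sets_mono Set.inter_subset_right)
  rintro ξ ⟨hA, hB⟩
  by_cases hAB : A ⊆ B
  · rwa [Set.inter_eq_left.mpr hAB]
  obtain ⟨x₀, hx₀A, hx₀B⟩ := Set.not_subset.mp hAB
  have hsξ := E.star_retract hx₀A hA
  have hcomp : E.chi B ∘ (fun x => if x ∈ A then x else x₀) = E.chi (A ∩ B) := by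
    funext x
    by_cases hx : x ∈ A
    · by_cases hxB : x ∈ B
      · simp [chi, Function.comp, hx, hxB]
      · simp [chi, Function.comp, hx, hxB]
    · have hni : x ∉ A ∩ B := fun hc => hx hc.1
      simp [chi, Function.comp, hx, hx₀B, hni]
  rw [E.mem_sets]
  calc E.star (E.chi (A ∩ B)) ξ
      = E.star (E.chi B ∘ (fun x => if x ∈ A then x else x₀)) ξ := by rw [hcomp]
    _ = E.star (E.chi B) (E.star (fun x => if x ∈ A then x else x₀) ξ) := by
        rw [E.comp]; rfl
    _ = E.incl E.one := by rw [hsξ]; exact E.mem_sets.mp hB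

lemma sets_sInter {G : Set (Set X)} (hG : G.Finite) :
    E.sets (⋂₀ G) = ⋂ A ∈ G, E.sets A := by
  refine Set.Finite.induction_on (motive := fun G _ => E.sets (⋂₀ G) = ⋂ A ∈ G, E.sets A) G hG ?_ ?_
  · simp [E.sets_univ]
  · intro a s _ _ ih
    rw [Set.sInter_insert, E.sets_inter, ih]
    simp

lemma isBasis :
    @TopologicalSpace.IsTopologicalBasis Y E.sTopology (Set.range E.sets) := by
  letI := E.sTopology
  refine ⟨?_, ?_, rfl⟩
  · rintro t₁ ⟨A, rfl⟩ t₂ ⟨B, rfl⟩ ξ hξ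
    exact ⟨E.sets (A ∩ B), ⟨A ∩ B, rfl⟩, by rw [E.sets_inter]; exact hξ,
      by rw [E.sets_inter]⟩
  · apply Set.eq_univ_of_univ_subset
    intro ξ _
    exact ⟨E.sets Set.univ, ⟨Set.univ, rfl⟩, by rw [E.sets_univ]; trivial⟩

lemma isClosed_sets (A : Set X) : @IsClosed Y E.sTopology (E.sets A) := by
  letI := E.sTopology
  have hop : IsOpen (E.sets A)ᶜ := by
    rw [← E.sets_compl]
    exact E.isBasis.isOpen ⟨Aᶜ, rfl⟩
  rw [← compl_compl (E.sets A)]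
  exact hop.isClosed_compl

lemma closed_eq (C : Set Y) (hC : @IsClosed Y E.sTopology C) :
    C = ⋂₀ {S | ∃ A : Set X, S = E.sets A ∧ C ⊆ E.sets A} := by
  letI := E.sTopology
  apply Set.Subset.antisymm
  · rintro ξ hξ S ⟨A, rfl, hCA⟩
    exact hCA hξ
  · intro ξ hξ
    by_contra hξC
    have hξCc : ξ ∈ Cᶜ := hξC
    obtain ⟨t, ⟨A, rfl⟩, hξt, htC⟩ :=
      E.isBasis.exists_subset_of_mem_open hξCc hC.isOpen_compl
    have hCA : C ⊆ E.sets Aᶜ := by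
      rw [E.sets_compl]
      intro η hη hηA
      exact htC hηA hη
    have := hξ (E.sets Aᶜ) ⟨Aᶜ, rfl, hCA⟩
    rw [E.sets_compl] at this
    exact this hξt

end FunctionalExtension

/-- A functional extension satisfies the principle Poss (every family of subsets of `X`
with the finite intersection property has star-extensions with nonempty intersection)
if and only if its S-topology is quasi-compact. -/
theorem stmt9 {X Y : Type*} (E : FunctionalExtension X Y) :
    (∀ F : Set (Set X), (∀ G ⊆ F, G.Finite → (⋂₀ G).Nonempty) →
      (⋂ A ∈ F, E.sets A).Nonempty) ↔
    @CompactSpace Y E.sTopology := by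
  letI := E.sTopology
  constructor
  · intro hPoss
    constructor
    apply isCompact_of_finite_subfamily_closed
    intro ι Z hZc hZe
    by_contra hne
    push_neg at hne
    have hfin : ∀ u : Finset ι, (⋂ i ∈ u, Z i).Nonempty := by
      intro u
      obtain ⟨ξ, -, hξ⟩ := hne u
      exact ⟨ξ, hξ⟩
    set F : Set (Set X) := {A | ∃ i, Z i ⊆ E.sets A} with hF
    have hFIP : ∀ G ⊆ F, G.Finite → (⋂₀ G).Nonempty := by
      intro G hGF hGfin
      have hchoice : ∀ A ∈ G, ∃ i, Z i ⊆ E.sets A := fun A hA => hGF hA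
      choose φ hφ using hchoice
      classical
      let u : Finset ι := hGfin.toFinset.attach.image
        (fun A => φ A.1 (hGfin.mem_toFinset.mp A.2))
      obtain ⟨ξ, hξ⟩ := hfin u
      have hξG : ξ ∈ ⋂ A ∈ G, E.sets A := by
        refine Set.mem_iInter₂.mpr fun A hA => ?_
        have hiu : φ A hA ∈ u := by
          refine Finset.mem_image.mpr ⟨⟨A, hGfin.mem_toFinset.mpr hA⟩, Finset.mem_attach _ _, rfl⟩
        exact hφ A hA (Set.mem_iInter₂.mp hξ _ hiu)
      rw [← E.sets_sInter hGfin] at hξG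
      by_contra hempty
      rw [Set.not_nonempty_iff_eq_empty] at hempty
      rw [hempty, E.sets_empty] at hξG
      exact hξG
    obtain ⟨ξ, hξ⟩ := hPoss F hFIP
    have hmem : ξ ∈ ⋂ i, Z i := by
      refine Set.mem_iInter.mpr fun i => ?_
      rw [E.closed_eq (Z i) (hZc i)]
      rintro S ⟨A, rfl, hA⟩
      exact Set.mem_iInter₂.mp hξ A ⟨i, hA⟩
    have : ξ ∈ Set.univ ∩ ⋂ i, Z i := ⟨trivial, hmem⟩
    rw [hZe] at this
    exact this
  · intro hcomp F hFIP
    by_contra h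
    rw [Set.not_nonempty_iff_eq_empty] at h
    have hZe : (Set.univ : Set Y) ∩ ⋂ A : F, E.sets A = ∅ := by
      rw [Set.univ_inter, Set.iInter_coe_set, ← h]
    obtain ⟨u, hu⟩ := (isCompact_univ (X := Y)).elim_finite_subfamily_closed
      (fun A : F => E.sets A) (fun A => E.isClosed_sets A) hZe
    set G : Set (Set X) := Subtype.val '' (u : Set F) with hG
    have hGfin : G.Finite := (u.finite_toSet).image _
    have hGF : G ⊆ F := by rintro A ⟨⟨A', hA'⟩, _, rfl⟩; exact hA'
    obtain ⟨x, hx⟩ := hFIP G hGF hGfin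
    have : E.incl x ∈ Set.univ ∩ ⋂ A ∈ u, E.sets (A : Set X) := by
      refine ⟨trivial, Set.mem_iInter₂.mpr fun A hA => ?_⟩
      exact E.incl_mem_sets (hx A.1 ⟨A, hA, rfl⟩)
    rw [hu] at this
    exact this
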